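/- arXiv:2409.00827 — 4 statements merged into one kernel-verified Lean document; each statement's English description precedes it below -/
import Mathlib

section
/- If G is a finite graph that is a W_p graph for a positive integer p, then every connected component of G contains at least p vertices; consequently n(G) ≥ p·c(G), where n(G) is the number of vertices of G and c(G) is the number of connected components of G. -/
namespace WpGraphs

variable {V : Type*}

/-- `S` is an independent set of `G`: its vertices are pairwise non-adjacent. -/
def IsIndepSet (G : SimpleGraph V) (S : Set V) : Prop :=
  S.Pairwise fun u v => ¬ G.Adj u v

/-- The independence number `α(G)`: the cardinality of a largest independent set. -/
noncomputable def indepNum (G : SimpleGraph V) : ℕ :=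
  sSup {n : ℕ | ∃ S : Set V, IsIndepSet G S ∧ S.ncard = n}

/-- A maximum independent set: an independent set of cardinality `α(G)`. -/
def IsMaxIndepSet (G : SimpleGraph V) (S : Set V) : Prop :=
  IsIndepSet G S ∧ S.ncard = indepNum G

/-- A maximal independent set: an independent set that cannot be extended. -/
def IsMaximalIndepSet (G : SimpleGraph V) (S : Set V) : Prop :=
  IsIndepSet G S ∧ ∀ T : Set V, IsIndepSet G T → S ⊆ T → S = T

/-- `G` is a `W_p` graph: `n(G) ≥ p` and every `p` pairwise disjoint independent sets
are contained in `p` pairwise disjoint maximum independent sets. -/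
def IsWp (G : SimpleGraph V) (p : ℕ) : Prop :=
  p ≤ Nat.card V ∧
    ∀ A : Fin p → Set V, (∀ i, IsIndepSet G (A i)) →
      (Pairwise fun i j => Disjoint (A i) (A j)) →
      ∃ S : Fin p → Set V, (∀ i, IsMaxIndepSet G (S i)) ∧
        (Pairwise fun i j => Disjoint (S i) (S j)) ∧ ∀ i, A i ⊆ S i

/-- The neighborhood `N_G(S)` of a set of vertices `S`. -/
def setNbhd (G : SimpleGraph V) (S : Set V) : Set V :=
  {v | v ∉ S ∧ ∃ u ∈ S, G.Adj u v}

/-- `G` is `λ`-quasi-regularizable: `λ·|S| ≤ |N_G(S)|` for every independent set `S`. -/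
def QuasiReg (G : SimpleGraph V) (lam : ℝ) : Prop :=
  ∀ S : Set V, IsIndepSet G S → lam * S.ncard ≤ ((setNbhd G S).ncard : ℝ)

/-- `s_k(G)`: the number of independent sets of cardinality `k` in `G`
(the `k`-th coefficient of the independence polynomial). -/
noncomputable def indepCount (G : SimpleGraph V) (k : ℕ) : ℕ :=
  {S : Set V | IsIndepSet G S ∧ S.ncard = k}.ncard

/-- The independence polynomial of `G` is log-concave:
`s_k² ≥ s_{k-1}·s_{k+1}` for all `1 ≤ k ≤ α(G) - 1`. -/
def IndepLogConcave (G : SimpleGraph V) : Prop :=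
  ∀ k : ℕ, 1 ≤ k → k + 1 ≤ indepNum G →
    indepCount G (k - 1) * indepCount G (k + 1) ≤ indepCount G k ^ 2

/-- The vertex set of the localization `G_A = G − N_G[A]`:
all vertices outside `A` having no neighbor in `A`. -/
def locSet (G : SimpleGraph V) (A : Set V) : Set V :=
  {v | v ∉ A ∧ ∀ u ∈ A, ¬ G.Adj u v}

/-- `G` is well-covered: all maximal independent sets have the same size. -/
def IsWellCovered (G : SimpleGraph V) : Prop :=
  ∀ S T : Set V, IsMaximalIndepSet G S → IsMaximalIndepSet G T → S.ncard = T.ncard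

/-- `G` is very well-covered: well-covered, no isolated vertices, and `n(G) = 2·α(G)`. -/
def IsVeryWellCovered (G : SimpleGraph V) : Prop :=
  IsWellCovered G ∧ (∀ v : V, ∃ w : V, G.Adj v w) ∧ Nat.card V = 2 * indepNum G

/-- The clique corona `G∘𝓗` where `𝓗 = {K_{p v} : v ∈ V(G)}`: each vertex `v` of `G`
is joined to all vertices of its own copy of the complete graph `K_{p v}`. -/
def cliqueCorona (G : SimpleGraph V) (p : V → ℕ) :
    SimpleGraph (V ⊕ Σ v : V, Fin (p v)) :=
  SimpleGraph.fromRel fun a b =>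
    match a, b with
    | .inl u, .inl v => G.Adj u v
    | .inl u, .inr ⟨v, _⟩ => u = v
    | .inr ⟨u, _⟩, .inr ⟨v, _⟩ => u = v
    | .inr _, .inl _ => False

theorem _root_.Function.injective_of_pairwise_disjoint_of_fiber {ι α β : Type*}
    {S : ι → Set α} (hS : Pairwise fun i j => Disjoint (S i) (S j)) (f : α → β)
    {x : ι × β → α} (hxS : ∀ a, x a ∈ S a.1) (hxf : ∀ a, f (x a) = a.2) :
    Function.Injective x := by
  rintro ⟨i, b⟩ ⟨j, b'⟩ hx
  obtain rfl : b = b' := by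
    have hb := hxf (i, b)
    rw [hx] at hb
    exact hb.symm.trans (hxf (j, b'))
  obtain rfl : i = j := by_contra fun hij => (hS hij).ne_of_mem (hxS (i, b)) (hxS (j, b)) hx
  rfl

theorem ncard_le_indepNum [Finite V] {G : SimpleGraph V} {S : Set V} (hS : IsIndepSet G S) :
    S.ncard ≤ indepNum G := by
  refine le_csSup ⟨Nat.card V, ?_⟩ ⟨S, hS, rfl⟩
  rintro _ ⟨T, -, rfl⟩
  exact Set.ncard_le_card T

/-- Otherwise a representative of a component missed by `S` could be added to `S`, as it has no
neighbour outside its own component. -/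
theorem IsMaxIndepSet.exists_mem_supp [Finite V] {G : SimpleGraph V} {S : Set V}
    (hS : IsMaxIndepSet G S) (c : G.ConnectedComponent) : ∃ x ∈ S, x ∈ c.supp := by
  by_contra! hmiss
  obtain ⟨v, rfl⟩ := c.exists_rep
  have hvS : v ∉ S := fun hv => hmiss v hv rfl
  have hnotadj : ∀ u ∈ S, ¬ G.Adj v u ∧ ¬ G.Adj u v := fun u hu =>
    ⟨fun hadj =>
      hmiss u hu (SimpleGraph.ConnectedComponent.connectedComponentMk_eq_of_adj hadj).symm,
      fun hadj => hmiss u hu (SimpleGraph.ConnectedComponent.connectedComponentMk_eq_of_adj hadj)⟩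
  have hinsert : IsIndepSet G (insert v S) :=
    Set.pairwise_insert.mpr ⟨hS.1, fun u hu _ => hnotadj u hu⟩
  have hcard := ncard_le_indepNum hinsert
  rw [Set.ncard_insert_of_notMem hvS, hS.2] at hcard
  omega

theorem IsWp.exists_pairwise_disjoint_isMaxIndepSet {G : SimpleGraph V} {p : ℕ}
    (h : IsWp G p) :
    ∃ S : Fin p → Set V, (∀ i, IsMaxIndepSet G (S i)) ∧
      Pairwise fun i j => Disjoint (S i) (S j) := by
  obtain ⟨S, hmax, hdisj, -⟩ :=
    h.2 (fun _ => ∅) (fun _ => Set.pairwise_empty _) fun _ _ _ => Set.disjoint_empty _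
  exact ⟨S, hmax, hdisj⟩

/-- Pick `p` pairwise disjoint maximum independent sets `S i`; each meets every component `c`
in some `x (i, c)`, and these points are pairwise distinct. -/
theorem wp_component_card_general {V : Type*} [Finite V] (G : SimpleGraph V) (p : ℕ)
    (hWp : IsWp G p) :
    (∀ c : G.ConnectedComponent, p ≤ Nat.card c.supp) ∧
      p * Nat.card G.ConnectedComponent ≤ Nat.card V := by
  obtain ⟨S, hmax, hdisj⟩ := hWp.exists_pairwise_disjoint_isMaxIndepSet
  choose x hxS hxc using fun a : Fin p × G.ConnectedComponent => (hmax a.1).exists_mem_supp a.2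
  have hx : Function.Injective x :=
    Function.injective_of_pairwise_disjoint_of_fiber hdisj G.connectedComponentMk hxS hxc
  refine ⟨fun c => ?_, ?_⟩
  · have hxc_inj : Function.Injective fun i : Fin p => (⟨x (i, c), hxc (i, c)⟩ : c.supp) :=
      fun i j hij => (Prod.ext_iff.mp (hx (congrArg Subtype.val hij))).1
    exact (Nat.card_fin p).symm.trans_le (Nat.card_le_card_of_injective _ hxc_inj)
  · simpa using Nat.card_le_card_of_injective x hx

/-- Every connected component of a finite `W_p` graph contains at least
`p` vertices; consequently `n(G) ≥ p·c(G)`. -/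
theorem wp_component_card {V : Type*} [Finite V] (G : SimpleGraph V) (p : ℕ)
    (hp : 0 < p) (hWp : IsWp G p) :
    (∀ c : G.ConnectedComponent, p ≤ Nat.card c.supp) ∧
      p * Nat.card G.ConnectedComponent ≤ Nat.card V :=
  wp_component_card_general G p hWp

end WpGraphs
end

section
/- Let H be a finite graph of order n and let p be a positive integer. If p ≥ n²/(4(n+1)), then the independence polynomial I(H∘K_p; x) of the clique corona graph H∘K_p is log-concave. -/
/-!
An independent set of `H ∘ K_p` of size `k` is an independent `i`-set `A` of `H` together with one
clique vertex over each of `j = k - i` vertices outside `A`, so with `n = |V(H)|`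

  `s_k(H ∘ K_p) = ∑_{i+j=k} s_i(H) C(n-i, j) p^j = C(n, k) B_k`,
  `B_k = ∑_{i+j=k} C(k, i) u_i p^j`,

where `u_i = s_i(H) / C(n, i)`. Local LYM makes `u` antitone, and Pascal's rule
`B_{k+1} = p B_k + ∑_{i+j=k} C(k, i) u_{i+1} p^j` then gives `p B_k ≤ B_{k+1} ≤ (p + 1) B_k`.
Log-concavity is thereby reduced to `(p + 1) C(n, k-1) C(n, k+1) ≤ p C(n, k)²`, i.e. to
`k (n - k) ≤ p (n + 1)`, which holds because `k (n - k) ≤ n² / 4`.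
-/

namespace WpGraphs

variable {V : Type*}

open Finset
open scoped FinsetFamily

section IndependentFinsets

variable {X : Type*} [Fintype X] (G : SimpleGraph X)

open Classical in
noncomputable def indepFinsets (k : ℕ) : Finset (Finset X) :=
  {s | IsIndepSet G ↑s ∧ #s = k}

variable {G} in
@[simp]
lemma mem_indepFinsets {k : ℕ} {s : Finset X} :
    s ∈ indepFinsets G k ↔ IsIndepSet G ↑s ∧ #s = k := by
  simp [indepFinsets]

lemma indepCount_eq_card_indepFinsets (k : ℕ) : indepCount G k = #(indepFinsets G k) := by
  have : {S : Set X | IsIndepSet G S ∧ S.ncard = k} =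
      (↑) '' (indepFinsets G k : Set (Finset X)) := by
    ext S
    constructor
    · rintro hS
      obtain ⟨s, rfl⟩ := S.toFinite.exists_finset_coe
      exact ⟨s, by simpa using hS, rfl⟩
    · rintro ⟨s, hs, rfl⟩
      simpa using hs
  rw [indepCount, this, Set.ncard_image_of_injective _ Finset.coe_injective, Set.ncard_coe_finset]

lemma indepCount_eq_zero_of_card_lt {k : ℕ} (hk : Fintype.card X < k) : indepCount G k = 0 := by
  rw [indepCount_eq_card_indepFinsets, card_eq_zero, eq_empty_iff_forall_notMem]
  rintro s hs
  have := card_le_univ s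
  rw [(mem_indepFinsets.1 hs).2] at this
  omega

lemma indepCount_succ_mul_le {k : ℕ} (hk : k < Fintype.card X) :
    indepCount G (k + 1) * (k + 1) ≤ indepCount G k * (Fintype.card X - k) := by
  classical
  have hsized : (indepFinsets G (k + 1) : Set (Finset X)).Sized (k + 1) :=
    fun s hs => (mem_indepFinsets.1 hs).2
  have hshadow : ∂ (indepFinsets G (k + 1)) ⊆ indepFinsets G k := by
    intro t ht
    obtain ⟨s, hs, a, ha, rfl⟩ := mem_shadow_iff.1 ht
    obtain ⟨hind, hcard⟩ := mem_indepFinsets.1 hs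
    exact mem_indepFinsets.2 ⟨hind.mono (by simp), by rw [card_erase_of_mem ha, hcard]; rfl⟩
  rw [indepCount_eq_card_indepFinsets, indepCount_eq_card_indepFinsets]
  calc #(indepFinsets G (k + 1)) * (k + 1)
      ≤ #(∂ (indepFinsets G (k + 1))) * (Fintype.card X - (k + 1) + 1) :=
        card_mul_le_card_shadow_mul hsized
    _ ≤ #(indepFinsets G k) * (Fintype.card X - k) := by
        rw [show Fintype.card X - (k + 1) + 1 = Fintype.card X - k by omega]
        exact Nat.mul_le_mul_right _ (card_le_card hshadow)

end IndependentFinsets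

section PartialSections

variable {α β : Type*}

def sectionGraph {T : Finset α} (g : T → β) : Finset (Σ _ : α, β) :=
  univ.map ⟨fun t => ⟨t.1, g t⟩, fun _ _ h => Subtype.ext (congrArg Sigma.fst h)⟩

lemma mk_mem_sectionGraph {T : Finset α} {g : T → β} {a : α} {b : β} :
    ⟨a, b⟩ ∈ sectionGraph g ↔ ∃ h : a ∈ T, g ⟨a, h⟩ = b := by
  simp only [sectionGraph, mem_map, mem_univ, true_and]
  constructor
  · rintro ⟨⟨t, ht⟩, h⟩
    cases h
    exact ⟨ht, rfl⟩
  · rintro ⟨h, rfl⟩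
    exact ⟨⟨a, h⟩, rfl⟩

lemma sectionGraph_injective :
    Function.Injective fun Tg : Σ T : Finset α, T → β => sectionGraph Tg.2 := by
  rintro ⟨T, g⟩ ⟨T', g'⟩ (h : sectionGraph g = sectionGraph g')
  have hmem {a : α} {ha : a ∈ T} : ∃ ha' : a ∈ T', g' ⟨a, ha'⟩ = g ⟨a, ha⟩ :=
    mk_mem_sectionGraph.1 (h ▸ mk_mem_sectionGraph.2 ⟨ha, rfl⟩)
  obtain rfl : T = T' := by
    ext a
    refine ⟨fun ha => (hmem (ha := ha)).1, fun ha => ?_⟩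
    have : (⟨a, g' ⟨a, ha⟩⟩ : Σ _ : α, β) ∈ sectionGraph g :=
      h ▸ mk_mem_sectionGraph.2 ⟨ha, rfl⟩
    exact (mk_mem_sectionGraph.1 this).1
  congr
  funext ⟨a, ha⟩
  exact (hmem (ha := ha)).2.symm

variable [Fintype α] [Fintype β]

open Classical in
noncomputable def partialSections (U : Finset α) (m : ℕ) : Finset (Finset (Σ _ : α, β)) :=
  {B | #B = m ∧ Set.InjOn Sigma.fst (B : Set (Σ _ : α, β)) ∧ ∀ x ∈ B, x.1 ∈ U}

@[simp]
lemma mem_partialSections {U : Finset α} {m : ℕ} {B : Finset (Σ _ : α, β)} :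
    B ∈ partialSections U m ↔
      #B = m ∧ Set.InjOn Sigma.fst (B : Set (Σ _ : α, β)) ∧ ∀ x ∈ B, x.1 ∈ U := by
  simp [partialSections]

lemma card_partialSections (U : Finset α) (m : ℕ) :
    #(partialSections U m : Finset (Finset (Σ _ : α, β))) =
      (#U).choose m * Fintype.card β ^ m := by
  classical
  have hcount : #((U.powersetCard m).sigma fun T => (univ : Finset (T → β)))
      = (#U).choose m * Fintype.card β ^ m := by
    rw [card_sigma, sum_congr rfl fun T hT => by
      rw [card_univ, Fintype.card_fun, Fintype.card_coe, (mem_powersetCard.1 hT).2]]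
    rw [sum_const, card_powersetCard, smul_eq_mul]
  rw [← hcount]
  symm
  refine card_bij (fun Tg _ => sectionGraph Tg.2) ?_ ?_ ?_
  · rintro ⟨T, g⟩ hT
    obtain ⟨hTU, hTm⟩ := mem_powersetCard.1 (mem_sigma.1 hT).1
    refine mem_partialSections.2 ⟨by simp [sectionGraph, hTm], ?_, ?_⟩
    · rintro ⟨a, b⟩ hx ⟨a', b'⟩ hx' (rfl : a = a')
      obtain ⟨h, rfl⟩ := mk_mem_sectionGraph.1 hx
      obtain ⟨h', rfl⟩ := mk_mem_sectionGraph.1 hx'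
      rfl
    · rintro ⟨a, b⟩ hx
      exact hTU (mk_mem_sectionGraph.1 hx).1
  · exact fun _ _ _ _ h => sectionGraph_injective h
  · intro B hB
    obtain ⟨hBm, hinj, hBU⟩ := mem_partialSections.1 hB
    have hex (t : B.image Sigma.fst) : ∃ b, ⟨t.1, b⟩ ∈ B := by
      obtain ⟨⟨a, b⟩, hx, hxt⟩ := mem_image.1 t.2
      exact ⟨b, hxt ▸ hx⟩
    choose g hg using hex
    refine ⟨⟨B.image Sigma.fst, g⟩, ?_, ?_⟩
    · refine mem_sigma.2 ⟨mem_powersetCard.2 ⟨?_, ?_⟩, mem_univ _⟩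
      · exact image_subset_iff.2 hBU
      · rw [card_image_of_injOn hinj, hBm]
    · ext ⟨a, b⟩
      rw [mk_mem_sectionGraph]
      constructor
      · rintro ⟨ha, rfl⟩
        exact hg ⟨a, ha⟩
      · intro hab
        have ha : a ∈ B.image Sigma.fst := mem_image_of_mem _ hab
        refine ⟨ha, ?_⟩
        have := hinj (hg ⟨a, ha⟩) hab rfl
        cases this
        rfl

end PartialSections

section Corona

variable (G : SimpleGraph V) (p : V → ℕ)

@[simp]
lemma cliqueCorona_adj_inl_inl {u v : V} :
    (cliqueCorona G p).Adj (.inl u) (.inl v) ↔ G.Adj u v := by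
  simpa [cliqueCorona, G.adj_comm] using G.ne_of_adj

@[simp]
lemma cliqueCorona_adj_inl_inr {u : V} {x : Σ v, Fin (p v)} :
    (cliqueCorona G p).Adj (.inl u) (.inr x) ↔ u = x.1 := by
  simp [cliqueCorona]

@[simp]
lemma cliqueCorona_adj_inr_inl {x : Σ v, Fin (p v)} {u : V} :
    (cliqueCorona G p).Adj (.inr x) (.inl u) ↔ x.1 = u := by
  simp [cliqueCorona, eq_comm]

@[simp]
lemma cliqueCorona_adj_inr_inr {x y : Σ v, Fin (p v)} :
    (cliqueCorona G p).Adj (.inr x) (.inr y) ↔ x ≠ y ∧ x.1 = y.1 := by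
  simp [cliqueCorona, eq_comm (a := y.1)]

lemma isIndepSet_cliqueCorona_iff (S : Finset (V ⊕ Σ v, Fin (p v))) :
    IsIndepSet (cliqueCorona G p) ↑S ↔
      IsIndepSet G ↑S.toLeft ∧ Set.InjOn Sigma.fst (S.toRight : Set (Σ v, Fin (p v))) ∧
        ∀ x ∈ S.toRight, x.1 ∉ S.toLeft := by
  have hS : (S : Set (V ⊕ Σ v, Fin (p v))) =
      Sum.inl '' ↑S.toLeft ∪ Sum.inr '' ↑S.toRight := by
    ext (x | x) <;> simp
  rw [IsIndepSet, hS, Set.pairwise_union, Sum.inl_injective.injOn.pairwise_image,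
    Sum.inr_injective.injOn.pairwise_image, Set.injOn_iff_pairwise_ne]
  refine and_congr ?_ (and_congr ?_ ?_)
  · simp only [IsIndepSet, Set.Pairwise, Function.onFun, cliqueCorona_adj_inl_inl]
  · simp only [Set.Pairwise, Function.onFun, cliqueCorona_adj_inr_inr]
    grind
  · simp only [Set.forall_mem_image, mem_coe, mem_toLeft, mem_toRight,
      cliqueCorona_adj_inl_inr, cliqueCorona_adj_inr_inl]
    grind
  
end Corona

section ConstantCorona

variable [Fintype V] (G : SimpleGraph V) (p : ℕ)

lemma card_indepFinsets_cliqueCorona (k : ℕ) :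
    #(indepFinsets (cliqueCorona G fun _ => p) k) =
      ∑ ij ∈ antidiagonal k,
        #(indepFinsets G ij.1) * ((Fintype.card V - ij.1).choose ij.2 * p ^ ij.2) := by
  classical
  calc #(indepFinsets (cliqueCorona G fun _ => p) k)
      = #((antidiagonal k).sigma fun ij =>
          (indepFinsets G ij.1).sigma fun A => partialSections (β := Fin p) Aᶜ ij.2) := by
        refine card_nbij' (fun S => ⟨(#S.toLeft, #S.toRight), ⟨S.toLeft, S.toRight⟩⟩)
          (fun x => x.2.1.disjSum x.2.2) ?_ ?_ ?_ ?_
        · intro S hS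
          obtain ⟨hind, hcard⟩ := mem_indepFinsets.1 hS
          obtain ⟨hL, hR, hLR⟩ := (isIndepSet_cliqueCorona_iff G _ S).1 hind
          simp only [coe_sigma, Set.mem_sigma_iff, mem_coe, HasAntidiagonal.mem_antidiagonal,
            card_toLeft_add_card_toRight, hcard, mem_indepFinsets, mem_partialSections, mem_compl,
            and_true, true_and]
          exact ⟨hL, hR, hLR⟩
        · rintro ⟨⟨i, j⟩, A, B⟩ h
          simp only [coe_sigma, Set.mem_sigma_iff, mem_coe, HasAntidiagonal.mem_antidiagonal,
            mem_indepFinsets, mem_partialSections, mem_compl] at h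
          obtain ⟨hij, ⟨hA, rfl⟩, rfl, hB, hAB⟩ := h
          refine mem_indepFinsets.2 ⟨?_, by rw [card_disjSum, hij]⟩
          rw [isIndepSet_cliqueCorona_iff, toLeft_disjSum, toRight_disjSum]
          exact ⟨hA, hB, hAB⟩
        · intro S _
          exact toLeft_disjSum_toRight
        · rintro ⟨⟨i, j⟩, A, B⟩ h
          simp only [coe_sigma, Set.mem_sigma_iff, mem_coe, mem_indepFinsets,
            mem_partialSections] at h
          obtain ⟨-, ⟨-, rfl⟩, rfl, -⟩ := h
          simp
    _ = _ := by
        rw [card_sigma]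
        refine sum_congr rfl fun ij _ => ?_
        rw [card_sigma, sum_congr rfl fun A hA => by
          rw [card_partialSections, card_compl, Fintype.card_fin, (mem_indepFinsets.1 hA).2]]
        rw [sum_const, smul_eq_mul]

end ConstantCorona

section BinomSum

noncomputable def binomSum (u : ℕ → ℝ) (x : ℝ) (m : ℕ) : ℝ :=
  ∑ ij ∈ antidiagonal m, (m.choose ij.1 : ℝ) * (u ij.1 * x ^ ij.2)

variable {u : ℕ → ℝ} {x : ℝ}

lemma binomSum_succ (u : ℕ → ℝ) (x : ℝ) (m : ℕ) :
    binomSum u x (m + 1) = x * binomSum u x m + binomSum (fun i => u (i + 1)) x m := by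
  rw [binomSum, sum_antidiagonal_choose_succ_mul (fun i j => u i * x ^ j), binomSum, mul_sum,
    binomSum]
  congr 1
  · exact sum_congr rfl fun ij _ => by ring
  · refine sum_congr rfl fun ij hij => ?_
    rw [Nat.choose_symm_of_eq_add (mem_antidiagonal.1 hij).symm]

lemma binomSum_nonneg (hu : ∀ i, 0 ≤ u i) (hx : 0 ≤ x) (m : ℕ) : 0 ≤ binomSum u x m :=
  sum_nonneg fun ij _ => by have := hu ij.1; positivity

lemma mul_binomSum_le_binomSum_succ (hu : ∀ i, 0 ≤ u i) (hx : 0 ≤ x) (m : ℕ) :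
    x * binomSum u x m ≤ binomSum u x (m + 1) := by
  rw [binomSum_succ]
  linarith [binomSum_nonneg (fun i => hu (i + 1)) hx m]

lemma binomSum_succ_le (hu : Antitone u) (hx : 0 ≤ x) (m : ℕ) :
    binomSum u x (m + 1) ≤ (x + 1) * binomSum u x m := by
  have : binomSum (fun i => u (i + 1)) x m ≤ binomSum u x m :=
    sum_le_sum fun ij _ => by gcongr; exact hu (Nat.le_succ _)
  rw [binomSum_succ]
  linarith

end BinomSum

lemma antitone_div_choose {n : ℕ} {a : ℕ → ℕ}
    (h : ∀ i < n, a (i + 1) * (i + 1) ≤ a i * (n - i)) :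
    Antitone fun i => (a i : ℝ) / n.choose i := by
  refine antitone_nat_of_succ_le fun i => ?_
  rcases lt_or_ge i n with hi | hi
  · have hpos : 0 < n.choose i := Nat.choose_pos hi.le
    have hpos' : 0 < n.choose (i + 1) := Nat.choose_pos hi
    rw [div_le_div_iff₀ (by exact_mod_cast hpos') (by exact_mod_cast hpos)]
    have : a (i + 1) * n.choose i * (i + 1) ≤ a i * n.choose (i + 1) * (i + 1) :=
      calc a (i + 1) * n.choose i * (i + 1) = a (i + 1) * (i + 1) * n.choose i := by ring
        _ ≤ a i * (n - i) * n.choose i := Nat.mul_le_mul_right _ (h i hi)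
        _ = a i * n.choose (i + 1) * (i + 1) := by
          rw [mul_assoc (a i) (n.choose (i + 1)), Nat.choose_succ_right_eq]; ring
    exact_mod_cast Nat.le_of_mul_le_mul_right this i.succ_pos
  -- here `n.choose (i + 1) = 0`, so the left side is `0` by the convention `x / 0 = 0`
  · rw [Nat.choose_eq_zero_of_lt (by omega : n < i + 1), Nat.cast_zero, div_zero]
    positivity

lemma succ_mul_choose_mul_choose_le {n p : ℕ} (h : n ^ 2 ≤ 4 * p * (n + 1)) (m : ℕ) :
    (p + 1) * (n.choose m * n.choose (m + 2)) ≤ p * n.choose (m + 1) ^ 2 := by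
  rcases lt_or_ge n (m + 2) with hn | hn
  · simp [Nat.choose_eq_zero_of_lt hn]
  obtain ⟨r, rfl⟩ : ∃ r, n = m + 2 + r := ⟨n - (m + 2), by omega⟩
  have h₁ : (m + 2 + r).choose (m + 1) * (m + 1) = (m + 2 + r).choose m * (r + 2) := by
    rw [Nat.choose_succ_right_eq]; congr 1; omega
  have h₂ : (m + 2 + r).choose (m + 2) * (m + 2) = (m + 2 + r).choose (m + 1) * (r + 1) := by
    rw [Nat.choose_succ_right_eq]; congr 1; omega
  -- AM-GM: `4 (m + 1) (r + 1) ≤ (m + r + 2)² = n²`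
  have hmr : (m + 1) * (r + 1) ≤ p * (m + r + 3) := by
    zify at h ⊢
    nlinarith [sq_nonneg ((m : ℤ) - r)]
  refine Nat.le_of_mul_le_mul_right (c := (r + 2) * (m + 2)) ?_ (by positivity)
  calc (p + 1) * ((m + 2 + r).choose m * (m + 2 + r).choose (m + 2)) * ((r + 2) * (m + 2))
      = (p + 1) * ((m + 2 + r).choose m * (r + 2)) * ((m + 2 + r).choose (m + 2) * (m + 2)) := by
        ring
    _ = (p + 1) * ((m + 1) * (r + 1)) * (m + 2 + r).choose (m + 1) ^ 2 := by
        rw [← h₁, h₂]; ring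
    _ ≤ p * ((r + 2) * (m + 2)) * (m + 2 + r).choose (m + 1) ^ 2 :=
        Nat.mul_le_mul_right _ (by nlinarith)
    _ = p * (m + 2 + r).choose (m + 1) ^ 2 * ((r + 2) * (m + 2)) := by ring

lemma indepCount_cliqueCorona [Fintype V] (G : SimpleGraph V) (p k : ℕ) :
    (indepCount (cliqueCorona G fun _ => p) k : ℝ) =
      (Fintype.card V).choose k *
        binomSum (fun i => indepCount G i / (Fintype.card V).choose i) p k := by
  rw [indepCount_eq_card_indepFinsets, card_indepFinsets_cliqueCorona, binomSum, mul_sum]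
  push_cast
  refine sum_congr rfl fun ⟨i, j⟩ hij => ?_
  obtain rfl : i + j = k := mem_antidiagonal.1 hij
  rw [← indepCount_eq_card_indepFinsets]
  rcases le_or_gt i (Fintype.card V) with hi | hi
  · have hchoose := Nat.choose_mul (n := Fintype.card V) (Nat.le_add_right i j)
    rw [Nat.add_sub_cancel_left] at hchoose
    have hpos : ((Fintype.card V).choose i : ℝ) ≠ 0 := by
      exact_mod_cast (Nat.choose_pos hi).ne'
    have hchooseR : ((Fintype.card V).choose i : ℝ) * (Fintype.card V - i).choose j =
        (Fintype.card V).choose (i + j) * (i + j).choose i := by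
      exact_mod_cast hchoose.symm
    field_simp
    linear_combination (indepCount G i * p ^ j : ℝ) * hchooseR
  · simp [indepCount_eq_zero_of_card_lt G hi]

lemma mul_mul_le_sq_of_ratio_bounds {x : ℝ} {c g : ℕ → ℝ} (hx : 0 < x) (m : ℕ)
    (hc : (x + 1) * (c m * c (m + 2)) ≤ x * c (m + 1) ^ 2)
    (hg₀ : 0 ≤ g m) (hg₂ : 0 ≤ g (m + 2))
    (hlow : x * g m ≤ g (m + 1)) (hup : g (m + 2) ≤ (x + 1) * g (m + 1)) :
    c m * g m * (c (m + 2) * g (m + 2)) ≤ (c (m + 1) * g (m + 1)) ^ 2 := by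
  have hg₁ : 0 ≤ g (m + 1) := le_trans (by positivity) hlow
  refine le_of_mul_le_mul_left ?_ (by positivity : 0 < x * (x + 1))
  calc x * (x + 1) * (c m * g m * (c (m + 2) * g (m + 2)))
      = (x + 1) * (c m * c (m + 2)) * (x * g m * g (m + 2)) := by ring
    _ ≤ x * c (m + 1) ^ 2 * (g (m + 1) * ((x + 1) * g (m + 1))) :=
        mul_le_mul hc (mul_le_mul hlow hup hg₂ hg₁) (by positivity) (by positivity)
    _ = x * (x + 1) * (c (m + 1) * g (m + 1)) ^ 2 := by ring

/-- For a finite graph `H` of order `n` and `p ≥ n²/(4(n+1))`,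
the independence polynomial of the clique corona `H∘K_p` is log-concave. -/
theorem corona_logConcave {V : Type*} [Finite V] (H : SimpleGraph V) (p : ℕ)
    (hp : 0 < p)
    (h : ((Nat.card V : ℝ)) ^ 2 / (4 * ((Nat.card V : ℝ) + 1)) ≤ (p : ℝ)) :
    IndepLogConcave (cliqueCorona H fun _ => p) := by
  cases nonempty_fintype V
  rw [Nat.card_eq_fintype_card] at h
  set n := Fintype.card V
  have hn : n ^ 2 ≤ 4 * p * (n + 1) := by
    rw [div_le_iff₀ (by positivity)] at h
    exact_mod_cast (by linarith : (n : ℝ) ^ 2 ≤ 4 * p * (n + 1))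
  set u : ℕ → ℝ := fun i => indepCount H i / n.choose i
  have hu : Antitone u := antitone_div_choose fun i hi => indepCount_succ_mul_le H hi
  have hu₀ : ∀ i, 0 ≤ u i := fun i => by positivity
  have hp₀ : (0 : ℝ) ≤ p := p.cast_nonneg
  rintro k hk -
  obtain ⟨m, rfl⟩ : ∃ m, k = m + 1 := ⟨k - 1, by omega⟩
  rw [Nat.add_sub_cancel, ← Nat.cast_le (α := ℝ)]
  push_cast
  simp only [indepCount_cliqueCorona]
  exact mul_mul_le_sq_of_ratio_bounds (c := fun i => (n.choose i : ℝ)) (g := binomSum u p)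
    (by exact_mod_cast hp) m (by exact_mod_cast succ_mul_choose_mul_choose_le hn m)
    (binomSum_nonneg hu₀ hp₀ m) (binomSum_nonneg hu₀ hp₀ (m + 2))
    (mul_binomSum_le_binomSum_succ hu₀ hp₀ m) (binomSum_succ_le hu hp₀ (m + 1))

end WpGraphs
end

section
/- Let G be a finite graph of order n with independence number α, and suppose G is λ-quasi-regularizable for some λ > 0. Writing I(G;x) = Σ_{k=0}^{α} s_k x^k for its independence polynomial, we have (k+1)·s_{k+1} ≤ (n − (λ+1)·k)·s_k for all 0 ≤ k ≤ α − 1. -/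
namespace WpGraphs

variable {V : Type*}

lemma indepCount_eq_filter_card {V : Type*} [Fintype V] [DecidableEq V]
    (G : SimpleGraph V) (m : ℕ)
    [DecidablePred fun S : Finset V => IsIndepSet G ↑S ∧ S.card = m] :
    indepCount G m =
      (Finset.univ.filter fun S : Finset V => IsIndepSet G ↑S ∧ S.card = m).card := by
  classical
  rw [indepCount]
  have himg : {S : Set V | IsIndepSet G S ∧ S.ncard = m} =
      (fun S : Finset V => (S : Set V)) ''
        ↑(Finset.univ.filter fun S : Finset V => IsIndepSet G ↑S ∧ S.card = m) := by
    ext S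
    simp only [Set.mem_setOf_eq, Set.mem_image, Finset.coe_filter, Finset.mem_univ,
      true_and]
    constructor
    · rintro ⟨h1, h2⟩
      refine ⟨(Set.toFinite S).toFinset, ⟨?_, ?_⟩, Set.Finite.coe_toFinset _⟩
      · rw [Set.Finite.coe_toFinset]; exact h1
      · rw [← Set.ncard_eq_toFinset_card S (Set.toFinite S)]; exact h2
    · rintro ⟨F, ⟨h1, h2⟩, rfl⟩
      exact ⟨h1, by simp [Set.ncard_coe_finset, h2]⟩
  rw [himg, Set.ncard_image_of_injective _ (fun a b h => Finset.coe_injective h),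
    Set.ncard_coe_finset]

/-- If `G` is `λ`-quasi-regularizable (`λ > 0`) of order `n` with
independence number `α`, then `(k+1)·s_{k+1} ≤ (n − (λ+1)·k)·s_k` for all
`0 ≤ k ≤ α − 1`. -/
theorem quasiReg_coeff_ineq {V : Type*} [Finite V] (G : SimpleGraph V) (lam : ℝ)
    (hlam : 0 < lam) (hqr : QuasiReg G lam) :
    ∀ k : ℕ, k + 1 ≤ indepNum G →
      ((k : ℝ) + 1) * indepCount G (k + 1) ≤
        ((Nat.card V : ℝ) - (lam + 1) * k) * indepCount G k := by
  classical
  cases nonempty_fintype V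
  intro k hk
  set A : Finset (Finset V) :=
    Finset.univ.filter fun S => IsIndepSet G ↑S ∧ S.card = k + 1 with hA
  set B : Finset (Finset V) :=
    Finset.univ.filter fun T => IsIndepSet G ↑T ∧ T.card = k with hB
  set ext : Finset V → Finset V :=
    fun T => Finset.univ.filter fun v => v ∉ T ∧ IsIndepSet G ↑(insert v T) with hext
  -- key double counting identity
  have key : (k + 1) * A.card = ∑ T ∈ B, (ext T).card := by
    have h1 : (A.sigma fun S => S).card = (k + 1) * A.card := by
      rw [Finset.card_sigma,
        Finset.sum_congr rfl fun S hS => (Finset.mem_filter.mp hS).2.2]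
      simp [mul_comm]
    have h2 : (B.sigma fun T => ext T).card = ∑ T ∈ B, (ext T).card :=
      Finset.card_sigma _ _
    rw [← h1, ← h2]
    apply Finset.card_bij (fun p _ => (⟨p.1.erase p.2, p.2⟩ : Σ _ : Finset V, V))
    · rintro ⟨S, v⟩ hp
      rw [Finset.mem_sigma] at hp ⊢
      obtain ⟨hSA, hvS⟩ := hp
      obtain ⟨-, hSi, hSc⟩ := Finset.mem_filter.mp hSA
      have herase : IsIndepSet G ↑(S.erase v) :=
        hSi.mono (by simpa using Finset.erase_subset v S)
      refine ⟨Finset.mem_filter.mpr ⟨Finset.mem_univ _, herase, ?_⟩, ?_⟩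
      · rw [Finset.card_erase_of_mem hvS, hSc]; rfl
      · refine Finset.mem_filter.mpr ⟨Finset.mem_univ _, Finset.notMem_erase _ _, ?_⟩
        rwa [Finset.insert_erase hvS]
    · rintro ⟨S, v⟩ hp ⟨S', v'⟩ hp' h
      rw [Finset.mem_sigma] at hp hp'
      obtain ⟨h1, h2⟩ := Sigma.mk.inj_iff.mp h
      have hv : v = v' := eq_of_heq h2
      subst hv
      dsimp only at hp hp' h1
      have hS : S = S' := by
        rw [← Finset.insert_erase hp.2, ← Finset.insert_erase hp'.2, h1]
      rw [hS]
    · rintro ⟨T, v⟩ hp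
      rw [Finset.mem_sigma] at hp
      obtain ⟨hTB, hvT⟩ := hp
      obtain ⟨-, hTi, hTc⟩ := Finset.mem_filter.mp hTB
      obtain ⟨-, hvnT, hins⟩ := Finset.mem_filter.mp hvT
      refine ⟨⟨insert v T, v⟩, ?_, ?_⟩
      · rw [Finset.mem_sigma]
        refine ⟨Finset.mem_filter.mpr ⟨Finset.mem_univ _, hins, ?_⟩,
          Finset.mem_insert_self _ _⟩
        rw [Finset.card_insert_of_notMem hvnT, hTc]
      · rw [Sigma.mk.inj_iff]
        exact ⟨by rw [Finset.erase_insert hvnT], heq_of_eq rfl⟩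
  -- per-T bound
  have hbound : ∀ T ∈ B, ((ext T).card : ℝ) ≤ (Nat.card V : ℝ) - (lam + 1) * k := by
    intro T hT
    obtain ⟨-, hTi, hTc⟩ := Finset.mem_filter.mp hT
    have hN := hqr ↑T hTi
    rw [Set.ncard_coe_finset, hTc] at hN
    set Nf : Finset V := (setNbhd G (↑T : Set V)).toFinset with hNf
    have hNcard : (setNbhd G (↑T : Set V)).ncard = Nf.card :=
      Set.ncard_eq_toFinset_card' _
    rw [hNcard] at hN
    have hdisj : Disjoint T Nf := by
      rw [Finset.disjoint_left]
      intro a haT haN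
      rw [hNf, Set.mem_toFinset] at haN
      exact haN.1 (by simpa using haT)
    have hsub : ext T ⊆ Finset.univ \ (T ∪ Nf) := by
      intro v hv
      obtain ⟨-, hvnT, hins⟩ := Finset.mem_filter.mp hv
      rw [Finset.mem_sdiff, Finset.mem_union]
      refine ⟨Finset.mem_univ _, ?_⟩
      rintro (h | h)
      · exact hvnT h
      · rw [hNf, Set.mem_toFinset] at h
        obtain ⟨u, huT, hadj⟩ := h.2
        have hu : u ∈ (↑(insert v T) : Set V) := by simp [Finset.mem_coe.mp huT]
        have hv' : v ∈ (↑(insert v T) : Set V) := by simp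
        have hne : u ≠ v := fun h' => hvnT (h' ▸ huT)
        exact hins hu hv' hne hadj
    have hle : T.card + Nf.card ≤ Fintype.card V := by
      rw [← Finset.card_union_of_disjoint hdisj, ← Finset.card_univ]
      exact Finset.card_le_card (Finset.subset_univ _)
    have hcard : (ext T).card + (T.card + Nf.card) ≤ Fintype.card V := by
      have := Finset.card_le_card hsub
      rw [Finset.card_sdiff_of_subset (Finset.subset_univ _), Finset.card_union_of_disjoint hdisj,
        Finset.card_univ] at this
      omega
    have hcardR : ((ext T).card : ℝ) ≤ (Fintype.card V : ℝ) - T.card - Nf.card := by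
      have : ((ext T).card : ℝ) + (T.card + Nf.card) ≤ (Fintype.card V : ℝ) := by
        exact_mod_cast hcard
      linarith
    rw [Nat.card_eq_fintype_card]
    rw [hTc] at hcardR
    have : (lam + 1) * k = lam * k + k := by ring
    rw [this]
    linarith
  -- assemble
  rw [indepCount_eq_filter_card, indepCount_eq_filter_card]
  have hL : ((k : ℝ) + 1) * ((Finset.univ.filter fun S : Finset V =>
      IsIndepSet G ↑S ∧ S.card = k + 1).card : ℝ) = (((k + 1) * A.card : ℕ) : ℝ) := by
    push_cast [hA]; ring
  rw [hL, key]
  push_cast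
  calc (∑ T ∈ B, ((ext T).card : ℝ)) ≤ ∑ T ∈ B, ((Nat.card V : ℝ) - (lam + 1) * k) :=
        Finset.sum_le_sum hbound
    _ = B.card * ((Nat.card V : ℝ) - (lam + 1) * k) := by
        rw [Finset.sum_const, nsmul_eq_mul]
    _ = ((Nat.card V : ℝ) - (lam + 1) * k) * ((Finset.univ.filter fun T : Finset V =>
          IsIndepSet G ↑T ∧ T.card = k).card : ℝ) := by rw [hB, mul_comm]

end WpGraphs
end

section
/- Let G be a finite connected W_p graph (p a positive integer) with independence number α, and write I(G;x) = Σ_{k=0}^{α} s_k x^k for its independence polynomial. Then p·(α − k)·s_k ≤ (k+1)·s_{k+1} for all 1 ≤ k ≤ α − 1. -/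
/-!
For an independent set `A` with `|A| = k`, choose `p` pairwise disjoint independent sets inside
the localization `G − N[A]` of largest total size. Enlarging the `j`-th of them by `A`, extending
the family to `p` disjoint maximum independent sets (the `W_p` property) and intersecting back with
the localization gives another such family: its `j`-th member has exactly `α − k` elements and the
others did not shrink. Hence every member of the optimal family has at least `α − k` elements, and
`G − N[A]` has at least `p(α − k)` vertices, i.e. `A` has at least `p(α − k)` independent
one-element extensions. Double counting the pairs `A ⊆ B` of independent sets of sizes `k` and
`k + 1`, each `B` having only `k + 1` subsets of size `k`, gives `p(α − k)s_k ≤ (k + 1)s_{k+1}`.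
-/

namespace WpGraphs

variable {V : Type*}

open Function

lemma sum_ncard_le_ncard_of_pairwise_disjoint {α ι : Type*} [Fintype ι] {L : Set α}
    {C : ι → Set α} (hL : L.Finite) (hCL : ∀ i, C i ⊆ L) (hC : Pairwise (Disjoint on C)) :
    ∑ i, (C i).ncard ≤ L.ncard := by
  have hfin : ∀ i, (C i).Finite := fun i => hL.subset (hCL i)
  rw [← finsum_eq_sum_of_fintype, ← Set.ncard_iUnion_of_finite hfin hC]
  exact Set.ncard_le_ncard (Set.iUnion_subset hCL) hL

lemma pairwise_disjoint_update {α ι : Type*} [DecidableEq ι] {C : ι → Set α} {X : Set α}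
    {j : ι} (hC : Pairwise (Disjoint on C)) (hX : ∀ i ≠ j, Disjoint X (C i)) :
    Pairwise (Disjoint on update C j X) := by
  intro a b hab
  simp only [onFun]
  rcases eq_or_ne a j with rfl | ha
  · rw [update_self, update_of_ne hab.symm]
    exact hX b hab.symm
  rcases eq_or_ne b j with rfl | hb
  · rw [update_self, update_of_ne ha]
    exact (hX a ha).symm
  · rw [update_of_ne ha, update_of_ne hb]
    exact hC hab

lemma le_of_sum_le_sum_of_forall_ne_le {ι M : Type*} [Fintype ι] [AddCommMonoid M]
    [PartialOrder M] [IsOrderedCancelAddMonoid M] {f g : ι → M} (j : ι)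
    (hsum : ∑ i, f i ≤ ∑ i, g i) (hle : ∀ i ≠ j, g i ≤ f i) : f j ≤ g j := by
  classical
  rw [← Finset.add_sum_erase _ _ (Finset.mem_univ j),
    ← Finset.add_sum_erase _ g (Finset.mem_univ j)] at hsum
  have hrest : ∑ i ∈ Finset.univ.erase j, g i ≤ ∑ i ∈ Finset.univ.erase j, f i :=
    Finset.sum_le_sum fun i hi => hle i (Finset.ne_of_mem_erase hi)
  exact le_of_add_le_add_right (hsum.trans (add_le_add_right hrest _))

variable {G : SimpleGraph V}

lemma IsIndepSet.mono {S T : Set V} (hS : IsIndepSet G S) (hTS : T ⊆ S) : IsIndepSet G T :=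
  Set.Pairwise.mono hTS hS

lemma disjoint_of_subset_locSet {A B : Set V} (hBA : B ⊆ locSet G A) : Disjoint A B :=
  Set.disjoint_right.mpr fun _ hv => (hBA hv).1

lemma IsIndepSet.union_of_subset_locSet {A B : Set V} (hA : IsIndepSet G A)
    (hB : IsIndepSet G B) (hBA : B ⊆ locSet G A) : IsIndepSet G (A ∪ B) := by
  rintro u (hu | hu) v (hv | hv) huv
  · exact hA hu hv huv
  · exact (hBA hv).2 u hu
  · exact fun h => (hBA hu).2 v hv h.symm
  · exact hB hu hv huv

lemma IsIndepSet.insert_of_mem_locSet {A : Set V} {v : V} (hA : IsIndepSet G A)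
    (hv : v ∈ locSet G A) : IsIndepSet G (insert v A) := by
  rw [← Set.union_singleton]
  exact hA.union_of_subset_locSet (Set.pairwise_singleton _ _) (Set.singleton_subset_iff.mpr hv)

lemma IsIndepSet.inter_locSet_eq_diff {A T : Set V} (hT : IsIndepSet G T) (hAT : A ⊆ T) :
    T ∩ locSet G A = T \ A := by
  ext v
  refine ⟨fun ⟨hvT, hvA, _⟩ => ⟨hvT, hvA⟩, fun ⟨hvT, hvA⟩ => ⟨hvT, hvA, fun u hu => ?_⟩⟩
  exact hT (hAT hu) hvT fun huv => hvA (huv ▸ hu)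

def IsIndepPacking {ι : Type*} (G : SimpleGraph V) (L : Set V) (C : ι → Set V) : Prop :=
  (∀ i, C i ⊆ L ∧ IsIndepSet G (C i)) ∧ Pairwise (Disjoint on C)

lemma exists_isIndepPacking_forall_sum_ncard_le {ι : Type*} [Fintype ι] [Finite V]
    (G : SimpleGraph V) (L : Set V) :
    ∃ C : ι → Set V, IsIndepPacking G L C ∧
      ∀ D : ι → Set V, IsIndepPacking G L D → ∑ i, (D i).ncard ≤ ∑ i, (C i).ncard := by
  have hempty : IsIndepPacking G L fun _ : ι => (∅ : Set V) :=
    ⟨fun _ => ⟨Set.empty_subset _, Set.pairwise_empty _⟩, fun _ _ _ => disjoint_bot_left⟩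
  obtain ⟨C, hC, hmax⟩ := Set.exists_max_image {C | IsIndepPacking G L C}
    (fun C => ∑ i, (C i).ncard) (Set.toFinite _) ⟨_, hempty⟩
  exact ⟨C, hC, hmax⟩

lemma IsWp.sub_ncard_le_of_forall_sum_ncard_le [Finite V] {p : ℕ} (hWp : IsWp G p)
    {A : Set V} (hA : IsIndepSet G A) {C : Fin p → Set V}
    (hC : IsIndepPacking G (locSet G A) C)
    (hmax : ∀ D : Fin p → Set V, IsIndepPacking G (locSet G A) D →
      ∑ i, (D i).ncard ≤ ∑ i, (C i).ncard)
    (j : Fin p) : indepNum G - A.ncard ≤ (C j).ncard := by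
  have hindep : ∀ i, IsIndepSet G (update C j (A ∪ C j) i) := by
    intro i
    rcases eq_or_ne i j with rfl | hi
    · simpa using hA.union_of_subset_locSet (hC.1 i).2 (hC.1 i).1
    · simpa [update_of_ne hi] using (hC.1 i).2
  have hdisj : Pairwise (Disjoint on update C j (A ∪ C j)) :=
    pairwise_disjoint_update hC.2 fun i hi =>
      Disjoint.union_left (disjoint_of_subset_locSet (hC.1 i).1) (hC.2 hi.symm)
  obtain ⟨T, hTmax, hTdisj, hsub⟩ := hWp.2 _ hindep hdisj
  let D : Fin p → Set V := fun i => T i ∩ locSet G A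
  have hD : IsIndepPacking G (locSet G A) D :=
    ⟨fun i => ⟨Set.inter_subset_right, (hTmax i).1.mono Set.inter_subset_left⟩,
      fun i i' hii' => (hTdisj hii').mono Set.inter_subset_left Set.inter_subset_left⟩
  have hCD : ∀ i ≠ j, (C i).ncard ≤ (D i).ncard := fun i hi =>
    Set.ncard_le_ncard (Set.subset_inter (by simpa [update_of_ne hi] using hsub i)
      (hC.1 i).1)
  have hAT : A ⊆ T j := Set.subset_union_left.trans (by simpa using hsub j)
  have hDj : (D j).ncard = indepNum G - A.ncard := by
    rw [show D j = T j ∩ locSet G A from rfl, (hTmax j).1.inter_locSet_eq_diff hAT,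
      Set.ncard_sdiff hAT, (hTmax j).2]
  exact hDj ▸ le_of_sum_le_sum_of_forall_ne_le j (hmax D hD) hCD

theorem IsWp.mul_sub_le_ncard_locSet [Finite V] {p : ℕ} (hWp : IsWp G p) {A : Set V}
    (hA : IsIndepSet G A) : p * (indepNum G - A.ncard) ≤ (locSet G A).ncard := by
  obtain ⟨C, hC, hmax⟩ := exists_isIndepPacking_forall_sum_ncard_le (ι := Fin p) G (locSet G A)
  calc p * (indepNum G - A.ncard) = ∑ _ : Fin p, (indepNum G - A.ncard) := by simp
    _ ≤ ∑ i, (C i).ncard :=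
      Finset.sum_le_sum fun j _ => hWp.sub_ncard_le_of_forall_sum_ncard_le hA hC hmax j
    _ ≤ (locSet G A).ncard :=
      sum_ncard_le_ncard_of_pairwise_disjoint (Set.toFinite _) (fun i => (hC.1 i).1) hC.2

lemma ncard_locSet_le_ncard_indep_supersets [Finite V] {A : Set V} (hA : IsIndepSet G A) :
    (locSet G A).ncard ≤ {B | IsIndepSet G B ∧ B.ncard = A.ncard + 1 ∧ A ⊆ B}.ncard := by
  refine Set.ncard_le_ncard_of_injOn (insert · A) (fun v hv => ?_)
    (fun v hv w _ hvw => (Set.insert_inj hv.1).mp hvw) (Set.toFinite _)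
  exact ⟨hA.insert_of_mem_locSet hv, Set.ncard_insert_of_notMem hv.1, Set.subset_insert _ _⟩

lemma ncard_subsets_of_ncard_add_one_le {α : Type*} {B : Set α} (hB : B.Finite) :
    {A | A ⊆ B ∧ A.ncard + 1 = B.ncard}.ncard ≤ B.ncard := by
  refine (Set.ncard_le_ncard (t := (fun v => B \ {v}) '' B) ?_ (hB.image _)).trans
    (Set.ncard_image_le hB)
  rintro A ⟨hAB, hcard⟩
  obtain ⟨v, hv⟩ := Set.ncard_eq_one.mp
    (by rw [Set.ncard_sdiff' hAB hB]; omega : (B \ A).ncard = 1)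
  have hvBA : v ∈ B \ A := hv ▸ rfl
  exact ⟨v, hvBA.1, by simp only [← hv, Set.sdiff_sdiff_cancel_left hAB]⟩

theorem mul_indepCount_le_of_le_ncard_locSet [Finite V] {m k : ℕ}
    (h : ∀ A, IsIndepSet G A → A.ncard = k → m ≤ (locSet G A).ncard) :
    m * indepCount G k ≤ (k + 1) * indepCount G (k + 1) := by
  classical
  have hs := Set.toFinite {S : Set V | IsIndepSet G S ∧ S.ncard = k}
  have ht := Set.toFinite {S : Set V | IsIndepSet G S ∧ S.ncard = k + 1}
  have hcount := Finset.card_mul_le_card_mul (· ⊆ ·) (s := hs.toFinset) (t := ht.toFinset)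
    (m := m) (n := k + 1) ?above ?below
  · rw [indepCount, indepCount, Set.ncard_eq_toFinset_card _ hs, Set.ncard_eq_toFinset_card _ ht]
    linarith
  case above =>
    intro A hA
    rw [Set.Finite.mem_toFinset] at hA
    refine (h A hA.1 hA.2).trans ((ncard_locSet_le_ncard_indep_supersets hA.1).trans_eq ?_)
    rw [← Set.ncard_coe_finset]
    congr 1
    ext B
    simp [Finset.bipartiteAbove, hA.2, and_assoc]
  case below =>
    intro B hB
    rw [Set.Finite.mem_toFinset] at hB
    rw [← Set.ncard_coe_finset, ← hB.2]
    refine le_trans (Set.ncard_le_ncard ?_ (Set.toFinite _))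
      (ncard_subsets_of_ncard_add_one_le (Set.toFinite B))
    intro A hA
    simp only [Finset.bipartiteBelow, Finset.coe_filter, Set.Finite.mem_toFinset,
      Set.mem_ofPred_eq] at hA
    exact ⟨hA.2, by rw [hA.1.2, hB.2]⟩

theorem wp_coeff_ineq_general {V : Type*} [Finite V] (G : SimpleGraph V) (p : ℕ)
    (hWp : IsWp G p) :
    ∀ k : ℕ, 1 ≤ k → k + 1 ≤ indepNum G →
      p * (indepNum G - k) * indepCount G k ≤ (k + 1) * indepCount G (k + 1) := by
  intro k _ _
  refine mul_indepCount_le_of_le_ncard_locSet fun A hA hAk => ?_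
  exact hAk ▸ hWp.mul_sub_le_ncard_locSet hA

/-- If `G` is a finite connected `W_p` graph with independence number
`α`, then `p·(α − k)·s_k ≤ (k+1)·s_{k+1}` for all `1 ≤ k ≤ α − 1`. -/
theorem wp_coeff_ineq {V : Type*} [Finite V] (G : SimpleGraph V) (p : ℕ)
    (hp : 0 < p) (hconn : G.Connected) (hWp : IsWp G p) :
    ∀ k : ℕ, 1 ≤ k → k + 1 ≤ indepNum G →
      p * (indepNum G - k) * indepCount G k ≤ (k + 1) * indepCount G (k + 1) :=
  wp_coeff_ineq_general G p hWp

end WpGraphs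
end
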